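/- arXiv:2605.10478 — 3 statements merged into one kernel-verified Lean document; each statement's English description precedes it below -/
import Mathlib

section
/- The function g(x) = x^4 · sin(log(log(1/|x|))) for 0 < |x| < 1/20, extended by g(0) = 0, is three times continuously differentiable on a neighborhood of 0, and g(0) = g'(0) = g''(0) = g'''(0) = 0. -/
open Real Filter Topology

/-!
Write `B x = (log x)⁻¹` and `L x = log (log x)`; since `Real.log` is even,
`log (log (1 / |x|)) = L x`. Because `B' = -B² / x` and `L' = B / x` away from `0, ±1`, the
derivative of `x ^ (m + 1) * (p(B) sin L + q(B) cos L)`, for polynomials `p, q`, is of the same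
shape `x ^ m * (p̃(B) sin L + q̃(B) cos L)`. As `B → 0` at `0`, such a function is `O(x ^ m)` there,
so for `m ≥ 2` it is differentiable at `0` with derivative `0` (again the value of the formula), and
for `m ≥ 1` it is continuous at `0`. Starting from `x ^ 4 sin L`, this gives three continuous
derivatives on `(-1, 1)`, all vanishing at `0`.
-/

namespace LogLogWave

open Polynomial Asymptotics Metric

noncomputable def wave (n : ℕ) (p q : ℝ[X]) (x : ℝ) : ℝ :=
  x ^ n * (p.eval (log x)⁻¹ * sin (log (log x)) + q.eval (log x)⁻¹ * cos (log (log x)))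

noncomputable def derivSinCoeff (m : ℕ) (p q : ℝ[X]) : ℝ[X] :=
  C (m : ℝ) * p - X ^ 2 * derivative p - X * q

noncomputable def derivCosCoeff (m : ℕ) (p q : ℝ[X]) : ℝ[X] :=
  C (m : ℝ) * q - X ^ 2 * derivative q + X * p

@[simp]
lemma wave_succ_zero (n : ℕ) (p q : ℝ[X]) : wave (n + 1) p q 0 = 0 := by
  simp [wave]

lemma hasDerivAt_wave_succ_of_ne (n : ℕ) (p q : ℝ[X]) {x : ℝ} (hx₀ : x ≠ 0) (hx₁ : x ≠ 1)
    (hx₂ : x ≠ -1) :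
    HasDerivAt (wave (n + 1) p q)
      (wave n (derivSinCoeff (n + 1) p q) (derivCosCoeff (n + 1) p q) x) x := by
  have hB := hasDerivAt_inv_log hx₀ hx₁ hx₂
  have hL := hasDerivAt_log_log hx₀ hx₁ hx₂
  have hlog : log x ≠ 0 := log_ne_zero.2 ⟨hx₀, hx₁, hx₂⟩
  have h : HasDerivAt (wave (n + 1) p q) _ x := (hasDerivAt_pow (n + 1) x).mul
    ((((p.hasDerivAt _).comp x hB).mul hL.sin).add (((q.hasDerivAt _).comp x hB).mul hL.cos))
  refine h.congr_deriv ?_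
  simp only [wave, derivSinCoeff, derivCosCoeff, eval_add, eval_sub, eval_mul, eval_C, eval_pow,
    eval_X, Function.comp_apply]
  field_simp
  push_cast
  ring

-- Relies on the junk values `log 0 = 0` and `0⁻¹ = 0`.
lemma continuousAt_inv_log_zero : ContinuousAt (fun x : ℝ ↦ (log x)⁻¹) 0 := by
  rw [ContinuousAt, ← nhdsNE_sup_pure, tendsto_sup]
  refine ⟨?_, tendsto_pure_nhds _ _⟩
  simp only [log_zero, inv_zero]
  exact tendsto_log_nhdsNE_zero.inv_tendsto_atBot

lemma isBigO_wave (n : ℕ) (p q : ℝ[X]) : wave n p q =O[𝓝 0] fun x ↦ x ^ n := by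
  have hB := continuousAt_inv_log_zero
  have hp := ((p.continuous.continuousAt).comp hB).isBigO_one ℝ
  have hq := ((q.continuous.continuousAt).comp hB).isBigO_one ℝ
  have hsin : (fun x : ℝ ↦ sin (log (log x))) =O[𝓝 0] fun _ ↦ (1 : ℝ) :=
    isBigO_of_le _ fun x ↦ by simpa using abs_sin_le_one _
  have hcos : (fun x : ℝ ↦ cos (log (log x))) =O[𝓝 0] fun _ ↦ (1 : ℝ) :=
    isBigO_of_le _ fun x ↦ by simpa using abs_cos_le_one _
  have h := (isBigO_refl (fun x : ℝ ↦ x ^ n) _).mul ((hp.mul hsin).add (hq.mul hcos))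
  simp only [mul_one] at h
  exact h

lemma hasDerivAt_wave_zero (n : ℕ) (p q : ℝ[X]) : HasDerivAt (wave (n + 2) p q) 0 0 := by
  rw [hasDerivAt_iff_isLittleO_nhds_zero]
  simpa using (isBigO_wave (n + 2) p q).trans_isLittleO (isLittleO_pow_id (by omega))

lemma hasDerivAt_wave (n : ℕ) (p q : ℝ[X]) {x : ℝ} (hx : x ∈ ball (0 : ℝ) 1) :
    HasDerivAt (wave (n + 2) p q)
      (wave (n + 1) (derivSinCoeff (n + 2) p q) (derivCosCoeff (n + 2) p q) x) x := by
  rw [mem_ball_zero_iff, norm_eq_abs, abs_lt] at hx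
  rcases eq_or_ne x 0 with rfl | hx₀
  · simpa using hasDerivAt_wave_zero n p q
  · exact hasDerivAt_wave_succ_of_ne (n + 1) p q hx₀ (by linarith) (by linarith)

lemma eqOn_deriv_wave (n : ℕ) (p q : ℝ[X]) :
    (ball (0 : ℝ) 1).EqOn (deriv (wave (n + 2) p q))
      (wave (n + 1) (derivSinCoeff (n + 2) p q) (derivCosCoeff (n + 2) p q)) :=
  fun _ hx ↦ (hasDerivAt_wave n p q hx).deriv

lemma continuousOn_wave_succ (n : ℕ) (p q : ℝ[X]) :
    ContinuousOn (wave (n + 1) p q) (ball 0 1) := by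
  intro x hx
  rw [mem_ball_zero_iff, norm_eq_abs, abs_lt] at hx
  refine ContinuousAt.continuousWithinAt ?_
  rcases eq_or_ne x 0 with rfl | hx₀
  · rw [ContinuousAt, wave_succ_zero]
    exact (isBigO_wave (n + 1) p q).trans_tendsto ((continuous_pow _).tendsto' 0 0 (by simp))
  · exact (hasDerivAt_wave_succ_of_ne n p q hx₀ (by linarith) (by linarith)).continuousAt

lemma contDiffOn_wave (k n : ℕ) (p q : ℝ[X]) :
    ContDiffOn ℝ k (wave (n + k + 1) p q) (ball 0 1) := by
  induction k generalizing n p q with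
  | zero => exact contDiffOn_zero.2 (continuousOn_wave_succ n p q)
  | succ k ih =>
    rw [Nat.cast_succ, contDiffOn_succ_iff_deriv_of_isOpen isOpen_ball]
    refine ⟨fun x hx ↦ (hasDerivAt_wave (n + k) p q hx).differentiableAt.differentiableWithinAt,
      by simp, (ih n _ _).congr (eqOn_deriv_wave (n + k) p q)⟩

end LogLogWave

open LogLogWave Metric

/-- The function `g(x) = x^4 * sin(log(log(1/|x|)))` for `x ≠ 0`, `g(0) = 0`,
is `C³` on a neighborhood of `0`, with `g(0) = g'(0) = g''(0) = g'''(0) = 0`. -/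
theorem stmt0 :
    ∃ s ∈ 𝓝 (0 : ℝ),
      ContDiffOn ℝ 3
        (fun x : ℝ => if x = 0 then 0 else x ^ 4 * Real.sin (Real.log (Real.log (1 / |x|)))) s ∧
      (fun x : ℝ => if x = 0 then 0 else x ^ 4 * Real.sin (Real.log (Real.log (1 / |x|)))) 0 = 0 ∧
      deriv (fun x : ℝ => if x = 0 then 0 else x ^ 4 * Real.sin (Real.log (Real.log (1 / |x|)))) 0 = 0 ∧
      deriv (deriv (fun x : ℝ => if x = 0 then 0 else x ^ 4 * Real.sin (Real.log (Real.log (1 / |x|))))) 0 = 0 ∧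
      deriv (deriv (deriv (fun x : ℝ => if x = 0 then 0 else x ^ 4 * Real.sin (Real.log (Real.log (1 / |x|)))))) 0 = 0 := by
  have hg :
      (fun x : ℝ => if x = 0 then 0 else x ^ 4 * sin (log (log (1 / |x|)))) = wave 4 1 0 := by
    funext x
    rcases eq_or_ne x 0 with rfl | hx
    · simp [wave]
    · simp [wave, hx, log_abs, log_neg_eq_log]
  rw [hg]
  have d1 := eqOn_deriv_wave 2 1 0
  have d2 := (d1.deriv isOpen_ball).trans (eqOn_deriv_wave 1 _ _)
  have d3 := (d2.deriv isOpen_ball).trans (eqOn_deriv_wave 0 _ _)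
  have h0 : (0 : ℝ) ∈ ball 0 1 := mem_ball_self one_pos
  exact ⟨ball 0 1, ball_mem_nhds 0 one_pos, contDiffOn_wave 3 0 1 0, wave_succ_zero 3 1 0,
    (d1 h0).trans (wave_succ_zero _ _ _), (d2 h0).trans (wave_succ_zero _ _ _),
    (d3 h0).trans (wave_succ_zero _ _ _)⟩
end

section
/- Let φ ∈ H¹(I) be Lipschitz on an interval I of a one-dimensional torus, u ∈ H²(I) positive satisfying −2ε²u'' + Vu = Eu on I (periodic setting). Then the Agmon identity holds: 2ε² ∫ |(e^{φ/(2ε)}u)'|² dx + ∫ (V − E − (1/2)|φ'|²) e^{φ/ε}u² dx = 0. -/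
open Real MeasureTheory

/-!
With `P = e^{φ/(2ε)}` one has `(P u)' = P (u' + φ' u / (2ε))`, and completing the square together
with `2ε² u'' = (V - E) u` shows that the integrand is the derivative of the flux
`2ε² e^{φ/ε} u u'`. The flux is `1`-periodic, so its integral over a period vanishes.
Integrability only needs `φ'` bounded, which is where the Lipschitz bound on `φ` enters.
-/

theorem Function.Periodic.deriv {f : ℝ → ℝ} {c : ℝ} (hf : Function.Periodic f c) :
    Function.Periodic (deriv f) c := fun x => by
  rw [← deriv_comp_add_const, show (fun y => f (y + c)) = f from funext hf]

theorem Function.Periodic.intervalIntegral_eq_zero_of_hasDerivAt {F f : ℝ → ℝ} {T : ℝ}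
    (hF : Function.Periodic F T) (hderiv : ∀ x, HasDerivAt F (f x) x) (a : ℝ)
    (hint : IntervalIntegrable f volume a (a + T)) : ∫ x in a..a + T, f x = 0 := by
  rw [intervalIntegral.integral_eq_sub_of_hasDerivAt (fun x _ => hderiv x) hint, hF, sub_self]

theorem LipschitzWith.intervalIntegrable_mul_deriv_pow {c φ : ℝ → ℝ} {K : NNReal}
    (hφ : LipschitzWith K φ) (hc : Continuous c) (n : ℕ) (a b : ℝ) :
    IntervalIntegrable (fun x => c x * deriv φ x ^ n) volume a b := by
  refine intervalIntegrable_iff.mpr <| (intervalIntegrable_iff.mp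
    (hc.intervalIntegrable (μ := volume) a b)).mul_bdd
    ((measurable_deriv φ).pow_const n).aestronglyMeasurable (c := K ^ n)
    (Filter.Eventually.of_forall fun x => ?_)
  rw [norm_pow]
  exact pow_le_pow_left₀ (norm_nonneg _) (norm_deriv_le_of_lipschitz hφ) n

section Agmon

variable {φ u : ℝ → ℝ}

theorem hasDerivAt_exp_div_mul (c : ℝ) {x : ℝ} (hφ : DifferentiableAt ℝ φ x)
    (hu : DifferentiableAt ℝ u x) :
    HasDerivAt (fun y => exp (φ y / c) * u y)
      (exp (φ x / c) * (deriv u x + deriv φ x / c * u x)) x :=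
  ((hφ.hasDerivAt.div_const c).exp.mul hu.hasDerivAt).congr_deriv (by ring)

theorem intervalIntegrable_sq_deriv_exp_div_mul {K : NNReal} (hφ : LipschitzWith K φ)
    (hφd : Differentiable ℝ φ) (hu : ContDiff ℝ 1 u) (c a b : ℝ) :
    IntervalIntegrable (fun x => (deriv (fun y => exp (φ y / c) * u y) x) ^ 2) volume a b := by
  have hφc : Continuous φ := hφ.continuous
  have hu' : Continuous (deriv u) := hu.continuous_deriv le_rfl
  have hsum := ((hφ.intervalIntegrable_mul_deriv_pow
    (c := fun x => (exp (φ x / c) * deriv u x) ^ 2) (by fun_prop) 0 a b).add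
    (hφ.intervalIntegrable_mul_deriv_pow
      (c := fun x => 2 * (exp (φ x / c) * deriv u x) * (exp (φ x / c) * u x / c))
      (by fun_prop) 1 a b)).add
    (hφ.intervalIntegrable_mul_deriv_pow
      (c := fun x => (exp (φ x / c) * u x / c) ^ 2) (by fun_prop) 2 a b)
  convert hsum using 2 with x
  rw [(hasDerivAt_exp_div_mul c (hφd x) (hu.differentiable one_ne_zero x)).deriv]
  ring

theorem hasDerivAt_agmon_flux {ε E x : ℝ} {V : ℝ → ℝ} (hε : ε ≠ 0)
    (hφ : DifferentiableAt ℝ φ x) (hu : DifferentiableAt ℝ u x)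
    (hu' : DifferentiableAt ℝ (deriv u) x)
    (heq : -2 * ε ^ 2 * deriv (deriv u) x + V x * u x = E * u x) :
    HasDerivAt (fun y => 2 * ε ^ 2 * (exp (φ y / ε) * (u y * deriv u y)))
      (2 * ε ^ 2 * (deriv (fun y => exp (φ y / (2 * ε)) * u y) x) ^ 2
        + (V x - E - (1 / 2) * (deriv φ x) ^ 2) * exp (φ x / ε) * (u x) ^ 2) x := by
  refine (((hφ.hasDerivAt.div_const ε).exp.mul (hu.hasDerivAt.mul hu'.hasDerivAt)).const_mul
    (2 * ε ^ 2)).congr_deriv ?_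
  have hexp : exp (φ x / ε) = exp (φ x / (2 * ε)) ^ 2 := by
    rw [← exp_nat_mul]; congr 1; field_simp; norm_num
  rw [(hasDerivAt_exp_div_mul (2 * ε) hφ hu).deriv, hexp, Pi.mul_apply]
  field_simp
  linear_combination (-2 * u x) * heq

end Agmon

theorem stmt10_general (ε : ℝ) (hε : 0 < ε) (V u φ : ℝ → ℝ) (E : ℝ) (K : NNReal)
    (hV : Continuous V)
    (hu : ContDiff ℝ 2 u) (huper : ∀ x, u (x + 1) = u x)
    (hφlip : LipschitzWith K φ) (hφdiff : Differentiable ℝ φ) (hφper : ∀ x, φ (x + 1) = φ x)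
    (heq : ∀ x, -2 * ε ^ 2 * deriv (deriv u) x + V x * u x = E * u x) :
    2 * ε ^ 2 * (∫ x in (0:ℝ)..1, (deriv (fun y => Real.exp (φ y / (2 * ε)) * u y) x) ^ 2)
      + (∫ x in (0:ℝ)..1,
          (V x - E - (1 / 2) * (deriv φ x) ^ 2) * Real.exp (φ x / ε) * (u x) ^ 2) = 0 := by
  have hu' : ContDiff ℝ 1 (deriv u) := hu.deriv'
  have hflux (x : ℝ) := hasDerivAt_agmon_flux (V := V) hε.ne' (hφdiff x)
    (hu.differentiable two_ne_zero x) (hu'.differentiable one_ne_zero x) (heq x)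
  have hflux_periodic : Function.Periodic
      (fun y => 2 * ε ^ 2 * (exp (φ y / ε) * (u y * deriv u y))) 1 := fun x => by
    simp only [hφper x, huper x, Function.Periodic.deriv huper x]
  have hA := intervalIntegrable_sq_deriv_exp_div_mul hφlip hφdiff (hu.of_le one_le_two) (2 * ε) 0 1
  have hB : IntervalIntegrable
      (fun x => (V x - E - (1 / 2) * (deriv φ x) ^ 2) * exp (φ x / ε) * (u x) ^ 2) volume 0 1 := by
    have hφc : Continuous φ := hφlip.continuous
    have huc : Continuous u := hu.continuous
    convert (hφlip.intervalIntegrable_mul_deriv_pow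
      (c := fun x => (V x - E) * exp (φ x / ε) * u x ^ 2) (by fun_prop) 0 0 1).sub
      (hφlip.intervalIntegrable_mul_deriv_pow
        (c := fun x => 1 / 2 * exp (φ x / ε) * u x ^ 2) (by fun_prop) 2 0 1) using 2
    ring
  rw [← intervalIntegral.integral_const_mul, ← intervalIntegral.integral_add (hA.const_mul _) hB]
  simpa using hflux_periodic.intervalIntegral_eq_zero_of_hasDerivAt hflux 0
    (by simpa using (hA.const_mul _).add hB)

/-- Agmon identity on the torus `𝕋 = ℝ/ℤ` (formulated with `1`-periodic functions on `ℝ`):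
if `u > 0` is `C²`, `1`-periodic and solves `−2ε²u'' + Vu = Eu`, and `φ` is a Lipschitz,
differentiable, `1`-periodic weight, then
`2ε² ∫₀¹ |(e^{φ/(2ε)}u)'|² + ∫₀¹ (V − E − (1/2)|φ'|²) e^{φ/ε} u² = 0`. -/
theorem stmt10 (ε : ℝ) (hε : 0 < ε) (V u φ : ℝ → ℝ) (E : ℝ) (K : NNReal)
    (hV : Continuous V) (hVper : ∀ x, V (x + 1) = V x)
    (hu : ContDiff ℝ 2 u) (huper : ∀ x, u (x + 1) = u x) (hupos : ∀ x, 0 < u x)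
    (hφlip : LipschitzWith K φ) (hφdiff : Differentiable ℝ φ) (hφper : ∀ x, φ (x + 1) = φ x)
    (heq : ∀ x, -2 * ε ^ 2 * deriv (deriv u) x + V x * u x = E * u x) :
    2 * ε ^ 2 * (∫ x in (0:ℝ)..1, (deriv (fun y => Real.exp (φ y / (2 * ε)) * u y) x) ^ 2)
      + (∫ x in (0:ℝ)..1,
          (V x - E - (1 / 2) * (deriv φ x) ^ 2) * Real.exp (φ x / ε) * (u x) ^ 2) = 0 :=
  stmt10_general ε hε V u φ E K hV hu huper hφlip hφdiff hφper heq
end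

section
/- One-dimensional pointwise bound from L² via a cutoff: suppose W ∈ C²([−2,2]) satisfies −W'' = qW on (−2,2) with ‖q‖_∞ ≤ M. Then W(0)² ≤ C(M) ∫_{−2}^{2} W(z)² dz for a constant C(M) depending only on M. -/
open Real MeasureTheory Set

set_option maxHeartbeats 1000000 in
/-- Pointwise bound from `L²`: if `−W'' = qW` on `(−2,2)` with `|q| ≤ M`, then
`W(0)² ≤ C(M) ∫_{−2}^{2} W²`, with `C(M)` depending only on `M`. -/
theorem stmt12 (M : ℝ) (hM : 0 ≤ M) :
    ∃ C > 0, ∀ W W' W'' q : ℝ → ℝ,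
      ContinuousOn W (Set.Icc (-2 : ℝ) 2) →
      (∀ z ∈ Set.Ioo (-2 : ℝ) 2, HasDerivAt W (W' z) z) →
      (∀ z ∈ Set.Ioo (-2 : ℝ) 2, HasDerivAt W' (W'' z) z) →
      ContinuousOn W'' (Set.Ioo (-2 : ℝ) 2) →
      (∀ z ∈ Set.Ioo (-2 : ℝ) 2, |q z| ≤ M) →
      (∀ z ∈ Set.Ioo (-2 : ℝ) 2, -W'' z = q z * W z) →
      (W 0) ^ 2 ≤ C * ∫ z in (-2 : ℝ)..2, (W z) ^ 2 := by
  set δ : ℝ := 1 / (4 * (M + 1)) with hδdef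
  have hδpos : 0 < δ := by positivity
  have hδle : δ ≤ 1 / 4 := by
    rw [hδdef]
    rw [div_le_div_iff₀ (by positivity) (by norm_num)]
    nlinarith
  have hδ8 : δ / 2 * (8 * (M + 1)) = 1 := by rw [hδdef]; field_simp; ring
  have hMδ : 4 * δ ^ 2 * M ≤ 1 / 2 := by
    have h : 4 * δ ^ 2 * M = M / (4 * (M + 1) ^ 2) := by rw [hδdef]; field_simp
    rw [h, div_le_div_iff₀ (by positivity) (by norm_num)]
    nlinarith
  clear_value δ
  clear hδdef
  refine ⟨512 * (M + 1), by positivity, ?_⟩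
  intro W W' W'' q hWc hW' hW'' hW''c hq hode
  -- the square is continuous and integrable
  have hWsq : ContinuousOn (fun z => W z ^ 2) (Icc (-2 : ℝ) 2) := hWc.pow 2
  have hInt : ∀ u v : ℝ, u ∈ Icc (-2:ℝ) 2 → v ∈ Icc (-2:ℝ) 2 →
      IntervalIntegrable (fun z => W z ^ 2) volume u v := by
    intro u v hu hv
    exact (hWsq.mono (uIcc_subset_Icc hu hv)).intervalIntegrable
  set I := ∫ z in (-2 : ℝ)..2, W z ^ 2 with hIdef
  have hI0 : 0 ≤ I := intervalIntegral.integral_nonneg (by norm_num) (fun x _ => sq_nonneg _)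
  clear_value I
  -- subsets
  have hsub1 : Icc (-δ) (-δ/2) ⊆ Icc (-2:ℝ) 2 := by
    apply Icc_subset_Icc <;> [linarith; linarith]
  have hsub2 : Icc (δ/2) δ ⊆ Icc (-2:ℝ) 2 := by
    apply Icc_subset_Icc <;> [linarith; linarith]
  -- mean value points a and b
  have meanpt : ∀ u v : ℝ, -2 ≤ u → u < v → v ≤ 2 →
      ∃ x ∈ Icc u v, W x ^ 2 * (v - u) ≤ I := by
    intro u v hu huv hv
    have hsub : Icc u v ⊆ Icc (-2:ℝ) 2 := Icc_subset_Icc hu hv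
    obtain ⟨x, hx, hxmin⟩ := isCompact_Icc.exists_isMinOn (nonempty_Icc.2 huv.le)
      ((hWsq.mono hsub))
    refine ⟨x, hx, ?_⟩
    have h1 : ∫ z in u..v, W x ^ 2 ≤ ∫ z in u..v, W z ^ 2 := by
      refine intervalIntegral.integral_mono_on huv.le intervalIntegrable_const
        (hInt u v ⟨hu, by linarith⟩ ⟨by linarith, hv⟩) ?_
      intro y hy
      exact isMinOn_iff.mp hxmin y hy
    have h2 : ∫ z in u..v, W z ^ 2 ≤ I := by
      rw [hIdef]
      refine intervalIntegral.integral_mono_interval hu huv.le hv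
        (Filter.Eventually.of_forall fun y => sq_nonneg _) (hInt (-2) 2 ?_ ?_)
      · exact ⟨le_refl _, by norm_num⟩
      · exact ⟨by norm_num, le_refl _⟩
    rw [intervalIntegral.integral_const, smul_eq_mul] at h1
    nlinarith
  obtain ⟨a, ha, haI⟩ := meanpt (-δ) (-δ/2) (by linarith) (by linarith) (by linarith)
  obtain ⟨b, hb, hbI⟩ := meanpt (δ/2) δ (by linarith) (by linarith) (by linarith)
  have haI' : W a ^ 2 * (δ/2) ≤ I := by
    have : (-δ/2 - -δ) = δ/2 := by ring
    rw [this] at haI; exact haI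
  have hbI' : W b ^ 2 * (δ/2) ≤ I := by
    have : (δ - δ/2) = δ/2 := by ring
    rw [this] at hbI; exact hbI
  have hab : a < b := by
    rcases ha with ⟨_, ha2⟩; rcases hb with ⟨hb1, _⟩; linarith
  have haIoo : Icc a b ⊆ Ioo (-2:ℝ) 2 := by
    rcases ha with ⟨ha1, _⟩; rcases hb with ⟨_, hb2⟩
    intro x hx
    exact ⟨by rcases hx with ⟨h, _⟩; linarith, by rcases hx with ⟨_, h⟩; linarith⟩
  have haIcc : Icc a b ⊆ Icc (-2:ℝ) 2 := haIoo.trans Ioo_subset_Icc_self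
  have hba : b - a ≤ 2 * δ := by rcases ha with ⟨h1, _⟩; rcases hb with ⟨_, h2⟩; linarith
  -- MVT point c
  obtain ⟨c, hc, hcslope⟩ := exists_hasDerivAt_eq_slope W W' hab (hWc.mono haIcc)
    (fun x hx => hW' x (haIoo (Ioo_subset_Icc_self hx)))
  have hWac : W' c * (b - a) = W b - W a := by
    rw [hcslope, div_mul_cancel₀]
    exact sub_ne_zero.mpr (ne_of_gt hab)
  -- maximum of |W| on [a,b]
  obtain ⟨z₀, hz₀, hz₀max⟩ := isCompact_Icc.exists_isMaxOn (nonempty_Icc.2 hab.le)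
    ((hWc.mono haIcc).abs)
  set S := |W z₀| with hSdef
  have hS0 : 0 ≤ S := abs_nonneg _
  have hSmax : ∀ x ∈ Icc a b, |W x| ≤ S := fun x hx => isMaxOn_iff.mp hz₀max x hx
  -- bound on W''
  have hW''bnd : ∀ x ∈ Icc a b, |W'' x| ≤ M * S := by
    intro x hx
    have hxI := haIoo hx
    have h1 : W'' x = -(q x * W x) := by have := hode x hxI; linarith
    rw [h1, abs_neg, abs_mul]
    exact mul_le_mul (hq x hxI) (hSmax x hx) (abs_nonneg _) hM
  -- bound on W' via Lipschitz
  have hW'bnd : ∀ x ∈ Icc a b, |W' x| ≤ |W' c| + (b - a) * (M * S) := by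
    intro x hx
    have hlip : ‖W' x - W' c‖ ≤ (M * S) * ‖x - c‖ :=
      Convex.norm_image_sub_le_of_norm_hasDerivWithin_le
        (fun y hy => (hW'' y (haIoo hy)).hasDerivWithinAt)
        (fun y hy => hW''bnd y hy) (convex_Icc a b) (Ioo_subset_Icc_self hc) hx
    have hxc : ‖x - c‖ ≤ b - a := by
      rw [Real.norm_eq_abs, abs_sub_le_iff]
      rcases hx with ⟨h1, h2⟩; rcases hc with ⟨h3, h4⟩
      constructor <;> linarith
    have : |W' x - W' c| ≤ (M * S) * (b - a) :=
      hlip.trans (mul_le_mul_of_nonneg_left hxc (mul_nonneg hM hS0))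
    calc |W' x| ≤ |W' x - W' c| + |W' c| := by
          have := abs_sub_abs_le_abs_sub (W' x) (W' c); linarith [abs_add_le (W' x - W' c) (W' c),
            abs_sub_abs_le_abs_sub (W' x) (W' c)]
      _ ≤ |W' c| + (b - a) * (M * S) := by nlinarith
  -- Lipschitz bound for W from a to z₀
  have hWlip : ‖W z₀ - W a‖ ≤ (|W' c| + (b - a) * (M * S)) * ‖z₀ - a‖ :=
    Convex.norm_image_sub_le_of_norm_hasDerivWithin_le
      (fun y hy => (hW' y (haIoo hy)).hasDerivWithinAt)
      hW'bnd (convex_Icc a b) (left_mem_Icc.2 hab.le) hz₀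
  have hz₀a : ‖z₀ - a‖ ≤ b - a := by
    rw [Real.norm_eq_abs, abs_sub_le_iff]
    rcases hz₀ with ⟨h1, h2⟩
    constructor <;> linarith
  -- combine: S ≤ |W a| + (b-a)|W' c| + (b-a)^2 M S
  have hSbnd : S ≤ |W a| + |W b - W a| + (b - a)^2 * (M * S) := by
    have h1 : S - |W a| ≤ |W z₀ - W a| := by
      have := abs_sub_abs_le_abs_sub (W z₀) (W a); linarith
    have h2 : |W z₀ - W a| ≤ (|W' c| + (b - a) * (M * S)) * (b - a) := by
      have hcnonneg : 0 ≤ |W' c| + (b - a) * (M * S) :=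
        add_nonneg (abs_nonneg _) (mul_nonneg (by linarith) (mul_nonneg hM hS0))
      calc |W z₀ - W a| ≤ (|W' c| + (b - a) * (M * S)) * ‖z₀ - a‖ := hWlip
        _ ≤ (|W' c| + (b - a) * (M * S)) * (b - a) :=
            mul_le_mul_of_nonneg_left hz₀a hcnonneg
    have h3 : |W' c| * (b - a) = |W b - W a| := by
      have hb0 : (0:ℝ) < b - a := by linarith
      rw [← abs_of_pos hb0, ← abs_mul, hWac]
    nlinarith
  have habs : (b - a)^2 * M ≤ 1 / 2 := by
    have h1 : (b - a)^2 ≤ 4 * δ^2 := by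
      have h0 : (0:ℝ) ≤ b - a := by linarith
      calc (b - a)^2 = (b - a) * (b - a) := sq (b - a) ▸ (sq (b-a)).symm ▸ (by ring)
        _ ≤ (2 * δ) * (2 * δ) := mul_self_le_mul_self h0 hba
        _ = 4 * δ^2 := by ring
    have h2 : (b - a)^2 * M ≤ 4 * δ ^ 2 * M := mul_le_mul_of_nonneg_right h1 hM
    linarith
  -- absorb
  have hSfinal : S ≤ 4 * |W a| + 2 * |W b| := by
    have h4 : |W b - W a| ≤ |W b| + |W a| := abs_sub _ _
    have h5 : (b - a)^2 * M * S ≤ 1/2 * S := mul_le_mul_of_nonneg_right habs hS0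
    have h6 : (b - a)^2 * (M * S) = (b - a)^2 * M * S := by ring
    linarith [hSbnd, h6 ▸ hSbnd]
  have hW0 : |W 0| ≤ S := hSmax 0 ⟨by rcases ha with ⟨_, h⟩; linarith,
    by rcases hb with ⟨h, _⟩; linarith⟩
  have hW0sq : W 0 ^ 2 ≤ S ^ 2 := by
    rw [← sq_abs (W 0)]; exact pow_le_pow_left₀ (abs_nonneg _) hW0 2
  clear hWc hW' hW'' hW''c hq hode hWsq hInt meanpt hsub1 hsub2 haIoo haIcc
  clear hW''bnd hW'bnd hWlip hz₀max hSmax hSbnd hWac hcslope hz₀a habs haI hbI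
  have hfin : S ^ 2 ≤ 24 * W a ^ 2 + 12 * W b ^ 2 := by
    have hsq : S * S ≤ (4 * |W a| + 2 * |W b|) * (4 * |W a| + 2 * |W b|) :=
      mul_self_le_mul_self hS0 hSfinal
    have e2 : 2 * |W a| * |W b| ≤ |W a| ^ 2 + |W b| ^ 2 := two_mul_le_add_sq _ _
    have e3 : |W a| ^ 2 = W a ^ 2 := sq_abs _
    have e4 : |W b| ^ 2 = W b ^ 2 := sq_abs _
    have e5 : S ^ 2 = S * S := sq S
    linarith [hsq, e2, e3, e4, e5]
  have hWa2 : W a ^ 2 ≤ 8 * (M + 1) * I := by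
    have h := mul_le_mul_of_nonneg_right haI' (by positivity : (0:ℝ) ≤ 8 * (M + 1))
    have h2 : W a ^ 2 * (δ / 2 * (8 * (M + 1))) ≤ I * (8 * (M + 1)) := by
      calc W a ^ 2 * (δ / 2 * (8 * (M + 1))) = W a ^ 2 * (δ / 2) * (8 * (M + 1)) := by ring
        _ ≤ I * (8 * (M + 1)) := h
    rw [hδ8, mul_one] at h2
    linarith
  have hWb2 : W b ^ 2 ≤ 8 * (M + 1) * I := by
    have h := mul_le_mul_of_nonneg_right hbI' (by positivity : (0:ℝ) ≤ 8 * (M + 1))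
    have h2 : W b ^ 2 * (δ / 2 * (8 * (M + 1))) ≤ I * (8 * (M + 1)) := by
      calc W b ^ 2 * (δ / 2 * (8 * (M + 1))) = W b ^ 2 * (δ / 2) * (8 * (M + 1)) := by ring
        _ ≤ I * (8 * (M + 1)) := h
    rw [hδ8, mul_one] at h2
    linarith
  calc W 0 ^ 2 ≤ S ^ 2 := hW0sq
    _ ≤ 24 * W a ^ 2 + 12 * W b ^ 2 := hfin
    _ ≤ 36 * (8 * (M + 1) * I) := by linarith
    _ ≤ 512 * (M + 1) * I := by nlinarith [mul_nonneg (by linarith : (0:ℝ) ≤ M + 1) hI0]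
end
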